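/- Two Dirac structures L₁, L₂ on V are gauge equivalent (i.e., L₂ = τ_B(L₁) for some skew-symmetric bilinear form B on V) if and only if ρ(L₁) = ρ(L₂) and the associated skew forms satisfy Ω_{L₁} = Ω_{L₂} + B|_{ρ(L₂)} for some skew-symmetric bilinear form B on V. -/

import Mathlib

open Module LinearMap

variable {V W U : Type*} [AddCommGroup V] [Module ℝ V] [FiniteDimensional ℝ V]
  [AddCommGroup W] [Module ℝ W] [FiniteDimensional ℝ W]
  [AddCommGroup U] [Module ℝ U] [FiniteDimensional ℝ U]

/-- The canonical symmetric pairing on `V ⊕ V*`. -/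
noncomputable def diracPairing (p q : V × Module.Dual ℝ V) : ℝ := (p.2 q.1 + q.2 p.1) / 2

/-- A subspace of `V ⊕ V*` is isotropic if the pairing vanishes on it. -/
def IsIsotropic (L : Submodule ℝ (V × Module.Dual ℝ V)) : Prop :=
  ∀ p ∈ L, ∀ q ∈ L, diracPairing p q = 0

/-- A Dirac structure: a maximally isotropic subspace. -/
def IsDirac (L : Submodule ℝ (V × Module.Dual ℝ V)) : Prop :=
  IsIsotropic L ∧ ∀ L' : Submodule ℝ (V × Module.Dual ℝ V), IsIsotropic L' → L ≤ L' → L' = L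

/-- The graph of a bivector `π : V* → V`. -/
def graphBiv (π : Module.Dual ℝ V →ₗ[ℝ] V) : Submodule ℝ (V × Module.Dual ℝ V) where
  carrier := {p | p.1 = π p.2}
  add_mem' := by
    intro a b ha hb
    simp only [Set.mem_setOf_eq, Prod.fst_add, Prod.snd_add, map_add] at *
    rw [ha, hb]
  zero_mem' := by simp
  smul_mem' := by
    intro c a ha
    simp only [Set.mem_setOf_eq, Prod.smul_fst, Prod.smul_snd, map_smul] at *
    rw [ha]

/-- Forward image of a Dirac structure along a linear map. -/
def Fwd (φ : V →ₗ[ℝ] W) (L : Submodule ℝ (V × Module.Dual ℝ V)) :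
    Submodule ℝ (W × Module.Dual ℝ W) where
  carrier := {q | ∃ x : V, q.1 = φ x ∧ (x, φ.dualMap q.2) ∈ L}
  add_mem' := by
    rintro a b ⟨x, hx, hxL⟩ ⟨y, hy, hyL⟩
    refine ⟨x + y, ?_, ?_⟩
    · simp [Prod.fst_add, hx, hy]
    · simpa [Prod.snd_add, Prod.mk_add_mk] using L.add_mem hxL hyL
  zero_mem' := ⟨0, by simp, by simp <;> exact L.zero_mem⟩
  smul_mem' := by
    rintro c a ⟨x, hx, hxL⟩
    refine ⟨c • x, ?_, ?_⟩
    · simp [Prod.smul_fst, hx]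
    · simpa [Prod.smul_snd, Prod.smul_mk] using L.smul_mem c hxL

/-- Backward image of a Dirac structure along a linear map. -/
def Bwd (φ : V →ₗ[ℝ] W) (L : Submodule ℝ (W × Module.Dual ℝ W)) :
    Submodule ℝ (V × Module.Dual ℝ V) where
  carrier := {p | ∃ η : Module.Dual ℝ W, p.2 = φ.dualMap η ∧ (φ p.1, η) ∈ L}
  add_mem' := by
    rintro a b ⟨x, hx, hxL⟩ ⟨y, hy, hyL⟩
    refine ⟨x + y, ?_, ?_⟩
    · simp [Prod.snd_add, hx, hy]
    · simpa [Prod.fst_add, Prod.mk_add_mk] using L.add_mem hxL hyL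
  zero_mem' := ⟨0, by simp, by simp <;> exact L.zero_mem⟩
  smul_mem' := by
    rintro c a ⟨x, hx, hxL⟩
    refine ⟨c • x, ?_, ?_⟩
    · simp [Prod.smul_snd, hx]
    · simpa [Prod.smul_fst, Prod.smul_mk] using L.smul_mem c hxL

/-- Gauge transformation of a Dirac structure by a 2-form `B : V → V*`. -/
def tau (B : V →ₗ[ℝ] Module.Dual ℝ V) (L : Submodule ℝ (V × Module.Dual ℝ V)) :
    Submodule ℝ (V × Module.Dual ℝ V) where
  carrier := {p | (p.1, p.2 - B p.1) ∈ L}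
  add_mem' := by
    intro a b ha hb
    have := L.add_mem ha hb
    simpa [Prod.mk_add_mk, Prod.fst_add, Prod.snd_add, map_add, add_sub_add_comm] using this
  zero_mem' := by simp <;> exact L.zero_mem
  smul_mem' := by
    intro c a ha
    have := L.smul_mem c ha
    simpa [Prod.smul_mk, Prod.smul_fst, Prod.smul_snd, smul_sub] using this

/-- Orthogonal of a subspace with respect to a bilinear form `Ω : V → V*`. -/
def orth (Ω : V →ₗ[ℝ] Module.Dual ℝ V) (S : Submodule ℝ V) : Submodule ℝ V where
  carrier := {x | ∀ y ∈ S, Ω x y = 0}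
  add_mem' := by
    intro a b ha hb y hy
    simp [map_add, ha y hy, hb y hy]
  zero_mem' := by simp
  smul_mem' := by
    intro c a ha y hy
    simp [ha y hy]

/-- Pullback of a 2-form along a linear map. -/
def pb (φ : V →ₗ[ℝ] W) (B : W →ₗ[ℝ] Module.Dual ℝ W) : V →ₗ[ℝ] Module.Dual ℝ V :=
  φ.dualMap ∘ₗ B ∘ₗ φ

/-- The Dirac structure associated to a pair `(R, Ω)` of a subspace and a skew form on it. -/
def diracOfForm (R : Submodule ℝ V) (Ω : R →ₗ[ℝ] Module.Dual ℝ R) :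
    Submodule ℝ (V × Module.Dual ℝ V) where
  carrier := {p | ∃ hx : p.1 ∈ R, ∀ y : R, p.2 y = Ω ⟨p.1, hx⟩ y}
  add_mem' := by
    rintro a b ⟨ha, Ha⟩ ⟨hb, Hb⟩
    refine ⟨R.add_mem ha hb, fun y => ?_⟩
    have h : (⟨(a + b).1, R.add_mem ha hb⟩ : R) = ⟨a.1, ha⟩ + ⟨b.1, hb⟩ := rfl
    rw [h, map_add]
    simp [Prod.snd_add, Ha y, Hb y]
  zero_mem' := by
    refine ⟨R.zero_mem, fun y => ?_⟩
    have h : (⟨((0 : V × Module.Dual ℝ V)).1, R.zero_mem⟩ : R) = 0 := rfl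
    rw [h, map_zero]
    rfl
  smul_mem' := by
    rintro c a ⟨ha, Ha⟩
    refine ⟨R.smul_mem c ha, fun y => ?_⟩
    have h : (⟨(c • a).1, R.smul_mem c ha⟩ : R) = c • ⟨a.1, ha⟩ := rfl
    rw [h, map_smul]
    simp [Prod.smul_snd, Ha y]

/-!
A Dirac structure `L` is determined by its range `ρ(L)` together with the forms `η|_{ρ(L)}`,
`(x, η) ∈ L`: isotropy makes `η|_{ρ(L)}` depend only on `x`, and maximality lets `η` be changed
freely off `ρ(L)`, since `(0, ξ)` can be added to `L` whenever `ξ` annihilates `ρ(L)`. A gauge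
transformation `τ_B` keeps `ρ(L)` and adds `B(x, ·)` to these forms; conversely, if the forms of
`L₁` and `L₂` differ by `B`, then `τ_{-B}(L₁)` is isotropic and contains `L₂`, so equals it.
-/

section

variable {E : Type*} [AddCommGroup E] [Module ℝ E]

lemma diracPairing_add_smul_add_smul (a c v : E × Module.Dual ℝ E) (r s : ℝ) :
    diracPairing (a + r • v) (c + s • v) =
      diracPairing a c + s * diracPairing a v + r * diracPairing c v +
        r * s * diracPairing v v := by
  unfold diracPairing
  simp only [Prod.fst_add, Prod.snd_add, Prod.smul_fst, Prod.smul_snd, map_add, map_smul,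
    LinearMap.add_apply, LinearMap.smul_apply, smul_eq_mul]
  ring

lemma IsIsotropic.sup_span_singleton {L : Submodule ℝ (E × Module.Dual ℝ E)}
    (hL : IsIsotropic L) {v : E × Module.Dual ℝ E} (hv : diracPairing v v = 0)
    (hLv : ∀ p ∈ L, diracPairing p v = 0) :
    IsIsotropic (L ⊔ Submodule.span ℝ {v}) := by
  intro p hp q hq
  obtain ⟨a, ha, _, hb, rfl⟩ := Submodule.mem_sup.mp hp
  obtain ⟨c, hc, _, hd, rfl⟩ := Submodule.mem_sup.mp hq
  obtain ⟨r, rfl⟩ := Submodule.mem_span_singleton.mp hb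
  obtain ⟨s, rfl⟩ := Submodule.mem_span_singleton.mp hd
  rw [diracPairing_add_smul_add_smul, hL a ha c hc, hLv a ha, hLv c hc, hv]
  ring

lemma IsIsotropic.apply_add_apply_eq_zero {L : Submodule ℝ (E × Module.Dual ℝ E)}
    (hL : IsIsotropic L) {x y : E} {η ζ : Module.Dual ℝ E} (hx : (x, η) ∈ L)
    (hy : (y, ζ) ∈ L) : η y + ζ x = 0 := by
  have := hL _ hx _ hy
  unfold diracPairing at this
  linarith

lemma IsIsotropic.apply_eq_of_mem {L : Submodule ℝ (E × Module.Dual ℝ E)}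
    (hL : IsIsotropic L) {x : E} {η η' : Module.Dual ℝ E} (hη : (x, η) ∈ L)
    (hη' : (x, η') ∈ L) {y : E} (hy : y ∈ L.map (LinearMap.fst ℝ E (Module.Dual ℝ E))) :
    η y = η' y := by
  obtain ⟨⟨y, ζ⟩, hζ, rfl⟩ := hy
  have := hL.apply_add_apply_eq_zero hη hζ
  have := hL.apply_add_apply_eq_zero hη' hζ
  simp only [LinearMap.fst_apply]
  linarith

lemma IsDirac.mk_zero_mem {L : Submodule ℝ (E × Module.Dual ℝ E)} (hL : IsDirac L)
    {ξ : Module.Dual ℝ E}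
    (hξ : ∀ y ∈ L.map (LinearMap.fst ℝ E (Module.Dual ℝ E)), ξ y = 0) :
    ((0 : E), ξ) ∈ L := by
  have hiso : IsIsotropic (L ⊔ Submodule.span ℝ {((0 : E), ξ)}) := by
    refine hL.1.sup_span_singleton (by simp [diracPairing]) fun p hp => ?_
    simp [diracPairing, hξ p.1 ⟨p, hp, rfl⟩]
  rw [← hL.2 _ hiso le_sup_left]
  exact Submodule.mem_sup_right (Submodule.mem_span_singleton_self _)

lemma IsDirac.mem_of_apply_eq {L : Submodule ℝ (E × Module.Dual ℝ E)} (hL : IsDirac L)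
    {x : E} {η η₀ : Module.Dual ℝ E} (hη₀ : (x, η₀) ∈ L)
    (hη : ∀ y ∈ L.map (LinearMap.fst ℝ E (Module.Dual ℝ E)), η y = η₀ y) :
    (x, η) ∈ L := by
  have hdiff : ((0 : E), η - η₀) ∈ L :=
    hL.mk_zero_mem fun y hy => by simp [hη y hy]
  simpa using L.add_mem hη₀ hdiff

lemma mem_tau_iff {B : E →ₗ[ℝ] Module.Dual ℝ E} {L : Submodule ℝ (E × Module.Dual ℝ E)}
    {p : E × Module.Dual ℝ E} : p ∈ tau B L ↔ (p.1, p.2 - B p.1) ∈ L := Iff.rfl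

lemma map_fst_tau (B : E →ₗ[ℝ] Module.Dual ℝ E) (L : Submodule ℝ (E × Module.Dual ℝ E)) :
    (tau B L).map (LinearMap.fst ℝ E (Module.Dual ℝ E)) =
      L.map (LinearMap.fst ℝ E (Module.Dual ℝ E)) := by
  ext x
  constructor
  · rintro ⟨p, hp, rfl⟩
    exact ⟨_, hp, rfl⟩
  · rintro ⟨p, hp, rfl⟩
    exact ⟨(p.1, p.2 + B p.1), by simpa [mem_tau_iff] using hp, rfl⟩

lemma IsIsotropic.tau {L : Submodule ℝ (E × Module.Dual ℝ E)} (hL : IsIsotropic L)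
    {B : E →ₗ[ℝ] Module.Dual ℝ E} (hB : ∀ x y : E, B x y = -B y x) :
    IsIsotropic (tau B L) := by
  intro p hp q hq
  have := hL.apply_add_apply_eq_zero hp hq
  have := hB p.1 q.1
  simp only [LinearMap.sub_apply] at *
  unfold diracPairing
  linarith

end

/-- Two Dirac structures are gauge equivalent iff they have the same range in
`V` and their skew forms differ by the restriction of a global skew form. -/
theorem stmt_13 (L₁ L₂ : Submodule ℝ (V × Module.Dual ℝ V))
    (h₁ : IsDirac L₁) (h₂ : IsDirac L₂) :
    (∃ B : V →ₗ[ℝ] Module.Dual ℝ V, (∀ x y : V, B x y = - B y x) ∧ L₂ = tau B L₁) ↔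
    (Submodule.map (LinearMap.fst ℝ V (Module.Dual ℝ V)) L₁ =
        Submodule.map (LinearMap.fst ℝ V (Module.Dual ℝ V)) L₂ ∧
      ∃ B : V →ₗ[ℝ] Module.Dual ℝ V, (∀ x y : V, B x y = - B y x) ∧
        ∀ (x : V) (η₁ η₂ : Module.Dual ℝ V), (x, η₁) ∈ L₁ → (x, η₂) ∈ L₂ →
          ∀ y ∈ Submodule.map (LinearMap.fst ℝ V (Module.Dual ℝ V)) L₂,
            η₁ y = η₂ y + B x y) := by
  constructor
  · rintro ⟨B, hB, rfl⟩
    refine ⟨(map_fst_tau B L₁).symm, -B, fun x y => by simp [hB x y],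
      fun x η₁ η₂ hη₁ hη₂ y hy => ?_⟩
    rw [map_fst_tau] at hy
    have := h₁.1.apply_eq_of_mem hη₁ (mem_tau_iff.mp hη₂) hy
    simp only [LinearMap.sub_apply] at this
    simp only [LinearMap.neg_apply]
    linarith
  · rintro ⟨hρ, B, hB, hΩ⟩
    have hB' : ∀ x y : V, (-B) x y = -(-B) y x := fun x y => by simp [hB x y]
    refine ⟨-B, hB', (h₂.2 _ (h₁.1.tau hB') ?_).symm⟩
    rintro ⟨x, η₂⟩ hη₂
    obtain ⟨⟨x, η₁⟩, hη₁, rfl⟩ : x ∈ L₁.map (LinearMap.fst ℝ V (Module.Dual ℝ V)) :=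
      hρ ▸ ⟨_, hη₂, rfl⟩
    refine mem_tau_iff.mpr (h₁.mem_of_apply_eq hη₁ fun y hy => ?_)
    have := hΩ x η₁ η₂ hη₁ hη₂ y (hρ ▸ hy)
    simp only [LinearMap.fst_apply, LinearMap.sub_apply, LinearMap.neg_apply]
    linarith
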